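/- For any n ≥ 1, X(1,2n)^{sp} = X(1,2n); that is, every V = (V_i)_{i∈ℤ/2nℤ} ∈ X(1,2n) satisfies V_i ⊆ (V_{−i})^⊥ for all i ∈ ℤ/2nℤ. -/

import Mathlib

open Matrix

/-- The Gram matrix Ω of the symplectic form: Ω_{s,t} = (−1)^{s+1} if s+t = 2n+1
(1-indexed) and 0 otherwise. -/
noncomputable def Omega (n : ℕ) : Matrix (Fin (2*n)) (Fin (2*n)) ℂ :=
  Matrix.of fun s t =>
    if ((s : ℕ) + 1) + ((t : ℕ) + 1) = 2*n + 1 then (-1 : ℂ)^((s : ℕ) + 1 + 1) else 0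

/-- The symplectic bilinear form ⟨v,w⟩ = vᵀ Ω w on ℂ^{2n}. -/
noncomputable def sform (n : ℕ) (v w : Fin (2*n) → ℂ) : ℂ :=
  v ⬝ᵥ (Omega n).mulVec w

/-- The form, as a linear map in its first argument (second argument fixed). -/
noncomputable def sformL (n : ℕ) (w : Fin (2*n) → ℂ) : (Fin (2*n) → ℂ) →ₗ[ℂ] ℂ where
  toFun v := sform n v w
  map_add' a b := by simp [sform, add_dotProduct]
  map_smul' c a := by simp [sform, smul_dotProduct]

/-- Orthogonal complement W^⊥ = {v | ⟨v,w⟩ = 0 for all w ∈ W} w.r.t. the symplectic form. -/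
noncomputable def sperp (n : ℕ) (W : Submodule ℂ (Fin (2*n) → ℂ)) :
    Submodule ℂ (Fin (2*n) → ℂ) :=
  ⨅ w ∈ W, LinearMap.ker (sformL n w)

theorem mem_sperp {n : ℕ} {W : Submodule ℂ (Fin (2*n) → ℂ)} {v : Fin (2*n) → ℂ} :
    v ∈ sperp n W ↔ ∀ w ∈ W, sform n v w = 0 := by
  simp [sperp, sformL, LinearMap.mem_ker]
  exact Iff.rfl

/-- The matrix of the shift map τ₁ : e_j ↦ e_{j+1} (1 ≤ j ≤ 2n−1), e_{2n} ↦ 0. -/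
noncomputable def tauMat (n : ℕ) : Matrix (Fin (2*n)) (Fin (2*n)) ℂ :=
  Matrix.of fun s t => if (s : ℕ) = (t : ℕ) + 1 then 1 else 0

/-- Membership in X(k,2n): a tuple of k-dimensional subspaces of ℂ^{2n} indexed by
ℤ/2nℤ with τ₁(V_i) ⊆ V_{i+1} for all i. -/
def memX (n k : ℕ) (V : ZMod (2*n) → Submodule ℂ (Fin (2*n) → ℂ)) : Prop :=
  (∀ i, Module.finrank ℂ (V i) = k) ∧
  (∀ i, Submodule.map (tauMat n).mulVecLin (V i) ≤ V (i + 1))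

/-!
The shift τ is skew-adjoint for the alternating form (τᵀΩ = -Ωτ), so
⟨τ^{2a} v, v⟩ = ±⟨τ^a v, τ^a v⟩ = 0. Given v ∈ V_i and w ∈ V_{-i}, choose a + b = n with
i + 2a = -i and -i + 2b = i; then τ^{2a} v ∈ V_{-i} and τ^{2b} w ∈ V_i. These are lines, so
if τ^{2a} v ≠ 0 it spans V_{-i} ∋ w, and if τ^{2b} w ≠ 0 it spans V_i ∋ v; either way ⟨v, w⟩
is a multiple of ⟨τ^{2a} v, v⟩ or of ⟨τ^{2b} w, w⟩. Otherwise v ∈ ker τ^{2a} and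
w ∈ ker τ^{2b}, which are spanned by the last 2a resp. 2b basis vectors, and Ω pairs these
trivially since 2a + 2b = 2n.
-/

theorem Fin.sum_ite_val_eq {M : Type*} [AddCommMonoid M] {N : ℕ} (j : ℕ) (f : Fin N → M) :
    ∑ u : Fin N, (if (u : ℕ) = j then f u else 0) = if h : j < N then f ⟨j, h⟩ else 0 := by
  split_ifs with h
  · rw [Fintype.sum_eq_single ⟨j, h⟩ fun u hu => if_neg fun hj => hu (Fin.ext hj)]
    simp
  · exact Finset.sum_eq_zero fun u _ => if_neg (by omega)

theorem Submodule.exists_smul_eq_of_finrank_eq_one {K E : Type*} [DivisionRing K]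
    [AddCommGroup E] [Module K E] {W : Submodule K E} (hW : Module.finrank K W = 1)
    {x y : E} (hx : x ∈ W) (hx0 : x ≠ 0) (hy : y ∈ W) : ∃ c : K, c • x = y := by
  obtain ⟨c, hc⟩ := (finrank_eq_one_iff_of_nonzero' (⟨x, hx⟩ : W)
    (by simpa using hx0)).mp hW ⟨y, hy⟩
  exact ⟨c, congrArg Subtype.val hc⟩

theorem ZMod.exists_add_eq_two_mul_cast {n : ℕ} (hn : 0 < n) (x : ZMod (2*n)) :
    ∃ a b : ℕ, a + b = n ∧
      ((2*a : ℕ) : ZMod (2*n)) = 2*x ∧ ((2*b : ℕ) : ZMod (2*n)) = -(2*x) := by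
  have : NeZero (2*n) := ⟨by omega⟩
  have ha : ((2 * (x.val % n) : ℕ) : ZMod (2*n)) = 2*x := by
    have h := congrArg (fun k : ℕ => ((2 * k : ℕ) : ZMod (2*n))) (Nat.mod_add_div x.val n)
    simp only [mul_add, ← mul_assoc, Nat.cast_add, Nat.cast_mul (2*n), ZMod.natCast_self,
      zero_mul, add_zero] at h
    rw [h]
    push_cast
    rw [ZMod.natCast_zmod_val]
  have ha_lt : x.val % n < n := Nat.mod_lt _ hn
  refine ⟨x.val % n, n - x.val % n, by omega, ha, ?_⟩
  have hsum : ((2 * (n - x.val % n) + 2 * (x.val % n) : ℕ) : ZMod (2*n)) = 0 := by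
    rw [← mul_add, Nat.sub_add_cancel ha_lt.le, ZMod.natCast_self]
  rw [Nat.cast_add, ha] at hsum
  linear_combination hsum

theorem Omega_transpose (n : ℕ) : (Omega n)ᵀ = -Omega n := by
  ext s t
  rw [transpose_apply, Matrix.neg_apply]
  simp only [Omega, of_apply]
  split_ifs with hst
  · have hodd : (-1 : ℂ) ^ (t + 1 + 1 : ℕ) * (-1) ^ (s + 1 + 1 : ℕ) = -1 := by
      rw [← pow_add]
      exact Odd.neg_one_pow ⟨n + 1, by omega⟩
    have hsq : (-1 : ℂ) ^ (s + 1 + 1 : ℕ) * (-1) ^ (s + 1 + 1 : ℕ) = 1 := by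
      rw [← pow_add]
      exact Even.neg_one_pow ⟨_, rfl⟩
    linear_combination (-1 : ℂ) ^ (s + 1 + 1 : ℕ) * hodd - (-1 : ℂ) ^ (t + 1 + 1 : ℕ) * hsq
  all_goals first | omega | simp

theorem tauMat_transpose_mul_Omega (n : ℕ) : (tauMat n)ᵀ * Omega n = -(Omega n * tauMat n) := by
  ext s t
  rw [Matrix.neg_apply]
  simp only [mul_apply, transpose_apply, tauMat, Omega, of_apply, boole_mul, mul_boole,
    Fin.sum_ite_val_eq]
  split_ifs <;> first | omega | ring

theorem sform_swap (n : ℕ) (v w : Fin (2*n) → ℂ) : sform n w v = -sform n v w := by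
  rw [sform, sform, dotProduct_mulVec, ← mulVec_transpose, Omega_transpose, neg_mulVec,
    neg_dotProduct, dotProduct_comm]

theorem sform_self (n : ℕ) (v : Fin (2*n) → ℂ) : sform n v v = 0 := by
  linear_combination sform_swap n v v / 2

theorem sform_smul_left (n : ℕ) (c : ℂ) (v w : Fin (2*n) → ℂ) :
    sform n (c • v) w = c * sform n v w :=
  smul_dotProduct c v _

theorem sform_tauMat_mulVec_left (n : ℕ) (v w : Fin (2*n) → ℂ) :
    sform n (tauMat n *ᵥ v) w = -sform n v (tauMat n *ᵥ w) := by
  rw [sform, sform, ← vecMul_transpose, ← dotProduct_mulVec, mulVec_mulVec,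
    tauMat_transpose_mul_Omega, neg_mulVec, ← mulVec_mulVec, dotProduct_neg]

theorem sform_tauMat_pow_mulVec_left (n m : ℕ) (v w : Fin (2*n) → ℂ) :
    sform n (tauMat n ^ m *ᵥ v) w = (-1) ^ m * sform n v (tauMat n ^ m *ᵥ w) := by
  induction m generalizing v with
  | zero => simp
  | succ m ih =>
    rw [pow_succ, ← mulVec_mulVec, ih, sform_tauMat_mulVec_left, mulVec_mulVec, ← pow_succ',
      pow_succ]
    ring

theorem sform_tauMat_pow_two_mul_mulVec_self (n m : ℕ) (v : Fin (2*n) → ℂ) :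
    sform n (tauMat n ^ (2 * m) *ᵥ v) v = 0 := by
  rw [two_mul m, pow_add, ← mulVec_mulVec, sform_tauMat_pow_mulVec_left, sform_self, mul_zero]

theorem tauMat_mulVec_apply_succ (n : ℕ) (v : Fin (2*n) → ℂ) (t : Fin (2*n))
    (h : (t : ℕ) + 1 < 2*n) : (tauMat n *ᵥ v) ⟨t + 1, h⟩ = v t := by
  simp [mulVec, dotProduct, tauMat, Fin.val_inj]

theorem tauMat_pow_mulVec_apply_add (n m : ℕ) (v : Fin (2*n) → ℂ) (t : Fin (2*n))
    (h : (t : ℕ) + m < 2*n) : (tauMat n ^ m *ᵥ v) ⟨t + m, h⟩ = v t := by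
  induction m with
  | zero => simp
  | succ m ih =>
    rw [pow_succ', ← mulVec_mulVec, ← ih (by omega)]
    exact tauMat_mulVec_apply_succ n _ ⟨t + m, by omega⟩ h

theorem sform_eq_zero_of_tauMat_pow_mulVec_eq_zero {n a b : ℕ} {v w : Fin (2*n) → ℂ}
    (hv : tauMat n ^ a *ᵥ v = 0) (hw : tauMat n ^ b *ᵥ w = 0) (hab : a + b ≤ 2*n) :
    sform n v w = 0 := by
  have hv' (s : Fin (2*n)) (hs : (s : ℕ) + a < 2*n) : v s = 0 := by
    rw [← tauMat_pow_mulVec_apply_add n a v s hs, hv, Pi.zero_apply]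
  have hw' (t : Fin (2*n)) (ht : (t : ℕ) + b < 2*n) : w t = 0 := by
    rw [← tauMat_pow_mulVec_apply_add n b w t ht, hw, Pi.zero_apply]
  simp only [sform, dotProduct, mulVec, Finset.mul_sum]
  refine Finset.sum_eq_zero fun s _ => Finset.sum_eq_zero fun t _ => ?_
  simp only [Omega, of_apply]
  split_ifs with hst
  · rcases Nat.lt_or_ge ((s : ℕ) + a) (2*n) with hs | hs
    · rw [hv' s hs, zero_mul]
    · rw [hw' t (by omega), mul_zero, mul_zero]
  · rw [zero_mul, mul_zero]

theorem tauMat_pow_mulVec_mem {n : ℕ} {V : ZMod (2*n) → Submodule ℂ (Fin (2*n) → ℂ)}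
    (hV : ∀ i, (V i).map (tauMat n).mulVecLin ≤ V (i + 1)) {j : ZMod (2*n)}
    {x : Fin (2*n) → ℂ} (hx : x ∈ V j) (m : ℕ) : tauMat n ^ m *ᵥ x ∈ V (j + m) := by
  induction m with
  | zero => simpa using hx
  | succ m ih =>
    rw [pow_succ', ← mulVec_mulVec, Nat.cast_succ, ← add_assoc]
    exact hV _ (Submodule.mem_map_of_mem ih)

/-- X(1,2n)^{sp} = X(1,2n), i.e. every V ∈ X(1,2n) satisfies
V_i ⊆ (V_{−i})^⊥ for all i ∈ ℤ/2nℤ. -/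
theorem statement7 (n : ℕ) (hn : 1 ≤ n)
    (V : ZMod (2*n) → Submodule ℂ (Fin (2*n) → ℂ)) (hV : memX n 1 V) :
    ∀ i, V i ≤ sperp n (V (-i)) := by
  intro i v hv
  rw [mem_sperp]
  intro w hw
  obtain ⟨a, b, hab, ha, hb⟩ := ZMod.exists_add_eq_two_mul_cast hn (-i)
  have hva : tauMat n ^ (2 * a) *ᵥ v ∈ V (-i) := by
    convert tauMat_pow_mulVec_mem hV.2 hv (2 * a) using 2
    rw [ha]
    ring
  have hwb : tauMat n ^ (2 * b) *ᵥ w ∈ V i := by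
    convert tauMat_pow_mulVec_mem hV.2 hw (2 * b) using 2
    rw [hb]
    ring
  rcases eq_or_ne (tauMat n ^ (2 * a) *ᵥ v) 0 with hva0 | hva0
  · rcases eq_or_ne (tauMat n ^ (2 * b) *ᵥ w) 0 with hwb0 | hwb0
    · exact sform_eq_zero_of_tauMat_pow_mulVec_eq_zero hva0 hwb0 (by omega)
    · obtain ⟨c, rfl⟩ := Submodule.exists_smul_eq_of_finrank_eq_one (hV.1 i) hwb hwb0 hv
      rw [sform_smul_left, sform_tauMat_pow_two_mul_mulVec_self, mul_zero]
  · obtain ⟨c, rfl⟩ := Submodule.exists_smul_eq_of_finrank_eq_one (hV.1 (-i)) hva hva0 hw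
    rw [← neg_eq_zero, ← sform_swap, sform_smul_left, sform_tauMat_pow_two_mul_mulVec_self,
      mul_zero]
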